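/- Let L_-, L_0, L_+ be linear orders such that L_- and L_0 have maximum elements and L_0 and L_+ have minimum elements, and let L := L_- ∔ L_0 ∔ L_+. If d(L_-) and d(L_+) are limit ordinals, then d(L) = max{d(L_-), d(L_0), d(L_+)}. -/

import Mathlib

universe u v

attribute [local instance] Classical.propDecidable

noncomputable section

namespace PaperHam

/-- The `i`-th projection of a set of tuples. -/
def proj {n : ℕ} {L : Fin n → Type u} (i : Fin n) (S : Set (∀ i, L i)) : Set (L i) :=
  (fun x => x i) '' S

/-- The set of strict lower bounds of `A` within the ambient carrier `K`. -/
def lowerStrictIn {α : Type u} [LT α] (K A : Set α) : Set α := {b ∈ K | ∀ a ∈ A, b < a}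

/-- The set of strict upper bounds of `A` within the ambient carrier `K`. -/
def upperStrictIn {α : Type u} [LT α] (K A : Set α) : Set α := {b ∈ K | ∀ a ∈ A, a < b}

/-- A sub-`n`-clat: a set of tuples coinciding with the product of its projections. -/
def IsSubClat {n : ℕ} {L : Fin n → Type u} (S : Set (∀ i, L i)) : Prop :=
  S = Set.pi Set.univ fun i => proj i S

/-- `H` is an abstract `n`-hammock in the `n`-clat `∏ K i`. -/
def IsHammockIn {n : ℕ} {L : Fin n → Type u} [∀ i, LinearOrder (L i)]
    (K : ∀ i, Set (L i)) (H : Set (∀ i, L i)) : Prop :=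
  ∃ (k : ℕ) (S : Fin (k + 1) → Set (∀ i, L i)),
    (∀ j, IsSubClat (S j)) ∧
    H = ⋃ j, S j ∧
    (∀ i, proj i H = K i) ∧
    (∀ i, (proj i (S 0) ∩ proj i (S (Fin.last k))).Nonempty) ∧
    ∀ (j : Fin k) (i : Fin n),
      lowerStrictIn (K i) (proj i (S j.castSucc)) ∩ proj i (S j.succ) = ∅ ∧
      upperStrictIn (K i) (proj i (S j.castSucc)) ∩
        lowerStrictIn (K i) (proj i (S j.succ)) = ∅ ∧
      proj i (S j.castSucc) ∩ upperStrictIn (K i) (proj i (S j.succ)) = ∅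

/-- `H` is an abstract `n`-hammock in the full `n`-clat `∏ i, L i`. -/
def IsHammock {n : ℕ} {L : Fin n → Type u} [∀ i, LinearOrder (L i)]
    (H : Set (∀ i, L i)) : Prop :=
  IsHammockIn (fun _ => Set.univ) H

/-- A subset of a (pre)ordered type is scattered if it contains no copy of `ℚ`. -/
def IsScatteredSet {α : Type*} [Preorder α] (A : Set α) : Prop :=
  ¬ ∃ f : ℚ → α, StrictMono f ∧ ∀ q, f q ∈ A

/-- An order is scattered if `ℚ` does not order-embed into it. -/
def IsScatteredOrder (α : Type*) [Preorder α] : Prop :=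
  ¬ ∃ f : ℚ → α, StrictMono f

/-- A box in a hammock `H`. -/
def IsBox {n : ℕ} {L : Fin n → Type u} [∀ i, LinearOrder (L i)]
    (H X : Set (∀ i, L i)) : Prop :=
  (∀ i, (proj i X).OrdConnected) ∧ X = H ∩ Set.pi Set.univ fun i => proj i X

/-- A maximal scattered box in `H`. -/
def IsMSB {n : ℕ} {L : Fin n → Type u} [∀ i, LinearOrder (L i)]
    (H X : Set (∀ i, L i)) : Prop :=
  IsBox H X ∧ IsScatteredSet X ∧ ∀ Y, IsBox H Y → IsScatteredSet Y → X ⊆ Y → Y = X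

/-- The scattered condensation class of `x` in the hammock `H`. -/
def condClass {n : ℕ} {L : Fin n → Type u} [∀ i, LinearOrder (L i)]
    (H : Set (∀ i, L i)) (x : ∀ i, L i) : Set (∀ i, L i) :=
  {y ∈ H | IsScatteredSet (H ∩ Set.uIcc x y)}

/-- The scattered condensation class of `x` in a linear order. -/
def condClassLin {α : Type*} [LinearOrder α] (x : α) : Set α :=
  {y | IsScatteredSet (Set.uIcc x y)}

/-- The Hausdorff condensation relation `∼_o` on a linear order. -/
def hrEquiv {α : Type u} [LinearOrder α] (o : Ordinal.{v}) : α → α → Prop :=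
  Ordinal.limitRecOn (motive := fun _ => α → α → Prop) o (fun x y => x = y)
    (fun _ R x y => {s : Set α | ∃ z ∈ Set.uIcc x y, s = {w ∈ Set.uIcc x y | R z w}}.Finite)
    (fun o _ ih x y => ∃ β, ∃ hβ : β < o, ih β hβ x y)

/-- The set of `∼_o`-classes of the linear order `α`. -/
def hrClasses (α : Type u) [LinearOrder α] (o : Ordinal.{u}) : Set (Set α) :=
  {s | ∃ z : α, s = {w | hrEquiv o z w}}

/-- The Hausdorff rank of a linear order: the least ordinal `o` with `α/∼_o` finite,
`⊤ = ∞` if there is none. -/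
def HRrank (α : Type u) [LinearOrder α] : WithTop Ordinal.{u} :=
  if _ : ∃ o : Ordinal.{u}, (hrClasses α o).Finite then
    ((sInf {o : Ordinal.{u} | (hrClasses α o).Finite} : Ordinal.{u}) : WithTop Ordinal.{u})
  else ⊤

/-- The density of a linear order, valued in `{-1} ∪ Ordinal ∪ {∞}`,
encoded as `WithBot (WithTop Ordinal)` (with `⊥ = -1` and `⊤ = ∞`). -/
def density (α : Type u) [LinearOrder α] : WithBot (WithTop Ordinal.{u}) :=
  if _ : ∃ o : Ordinal.{u}, (hrClasses α o).Finite then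
    if Nonempty α then
      (((Ordinal.omega0.{u} * sInf {o : Ordinal.{u} | (hrClasses α o).Finite} +
          (((hrClasses α (sInf {o : Ordinal.{u} | (hrClasses α o).Finite})).ncard - 1 : ℕ) :
            Ordinal.{u}) : Ordinal.{u}) : WithTop Ordinal.{u}) : WithBot (WithTop Ordinal.{u}))
    else ⊥
  else ((⊤ : WithTop Ordinal.{u}) : WithBot (WithTop Ordinal.{u}))

/-- The Hausdorff rank attached to a density value: `∞` if the density is `∞`, and
otherwise the unique ordinal `a` such that the density is `ω·a + p` with `p < ω`. -/
def rankOfDensity (d : WithBot (WithTop Ordinal.{u})) : WithTop Ordinal.{u} :=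
  if h : ∃ o : Ordinal.{u}, d = ((o : WithTop Ordinal.{u}) : WithBot (WithTop Ordinal.{u})) then
    ((h.choose / Ordinal.omega0.{u} : Ordinal.{u}) : WithTop Ordinal.{u})
  else ⊤

/-- A chain in a partial order is linearly ordered. -/
def chainLinearOrder {P : Type u} [PartialOrder P] {A : Set P}
    (h : IsChain (· ≤ ·) A) : LinearOrder ↥A :=
  { (inferInstance : PartialOrder ↥A) with
    le_total := fun a b => by
      rcases eq_or_ne (a : P) (b : P) with hab | hab
      · exact Or.inl (le_of_eq (Subtype.ext hab))
      · exact (h a.2 b.2 hab).imp Subtype.coe_le_coe.mp Subtype.coe_le_coe.mp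
    toDecidableLE := Classical.decRel _ }

/-- The density of a chain in a partial order. -/
def chainDensity {P : Type u} [PartialOrder P] (A : Set P) (h : IsChain (· ≤ ·) A) :
    WithBot (WithTop Ordinal.{u}) :=
  @density ↥A (chainLinearOrder h)

/-- The density of a subset of a partial order: the supremum of the densities of its
chains having a maximum and a minimum. -/
def posetDensitySet {P : Type u} [PartialOrder P] (X : Set P) :
    WithBot (WithTop Ordinal.{u}) :=
  sSup {d | ∃ (A : Set P) (h : IsChain (· ≤ ·) A), A ⊆ X ∧
    (∃ m ∈ A, ∀ a ∈ A, a ≤ m) ∧ (∃ m ∈ A, ∀ a ∈ A, m ≤ a) ∧ d = chainDensity A h}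

/-- A linear order is discrete if every non-maximal element has an immediate successor and
every non-minimal element has an immediate predecessor. -/
def IsDiscreteOrder (α : Type*) [LinearOrder α] : Prop :=
  (∀ x : α, (∃ y, x < y) → ∃ y, x ⋖ y) ∧ ∀ x : α, (∃ y, y < x) → ∃ y, y ⋖ x

/-- `A` is an initial segment (prefix) of `B`. -/
def IsLowerWithin {α : Type*} [Preorder α] (A B : Set α) : Prop :=
  A ⊆ B ∧ ∀ a ∈ A, ∀ b ∈ B, b ≤ a → b ∈ A

/-- `A` is a final segment (suffix) of `B`. -/
def IsUpperWithin {α : Type*} [Preorder α] (A B : Set α) : Prop :=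
  A ⊆ B ∧ ∀ a ∈ A, ∀ b ∈ B, a ≤ b → b ∈ A

/-- A bottom corner of the hammock `H`: a box of `H` which is an `n`-clat such that each
projection is a prefix of the corresponding projection of `H` order-isomorphic to
`L' · ω*` (i.e. `Lex (ℕᵒᵈ × L')`) for some linear order `L'`. -/
def IsBottomCorner {n : ℕ} {L : Fin n → Type u} [∀ i, LinearOrder (L i)]
    (H F : Set (∀ i, L i)) : Prop :=
  IsBox H F ∧ IsSubClat F ∧
    ∀ i, IsLowerWithin (proj i F) (proj i H) ∧
      ∃ (β : Type u) (_ : LinearOrder β), Nonempty (↥(proj i F) ≃o Lex (ℕᵒᵈ × β))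

/-- A top corner of the hammock `H`: a box of `H` which is an `n`-clat such that each
projection is a suffix of the corresponding projection of `H` order-isomorphic to
`L' · ω` (i.e. `Lex (ℕ × L')`) for some linear order `L'`. -/
def IsTopCorner {n : ℕ} {L : Fin n → Type u} [∀ i, LinearOrder (L i)]
    (H F : Set (∀ i, L i)) : Prop :=
  IsBox H F ∧ IsSubClat F ∧
    ∀ i, IsUpperWithin (proj i F) (proj i H) ∧
      ∃ (β : Type u) (_ : LinearOrder β), Nonempty (↥(proj i F) ≃o Lex (ℕ × β))

/-- `W` is the dot sum `A ∔ B ∔ C` of the three subsets `A`, `B`, `C` of a linear order: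
the union is `W`, the maximum of `A` is the minimum of `B`, and the maximum of `B` is the
minimum of `C`. -/
def TripleDotSumEq {α : Type*} [LinearOrder α] (A B C W : Set α) : Prop :=
  W = A ∪ B ∪ C ∧ (∃ x, IsGreatest A x ∧ IsLeast B x) ∧ ∃ y, IsGreatest B y ∧ IsLeast C y

/-- A corner decomposition `(F₋, H₀, F₊)` of the hammock `H`. -/
def IsCornerDecomp {n : ℕ} {L : Fin n → Type u} [∀ i, LinearOrder (L i)]
    (H Fm H0 Fp : Set (∀ i, L i)) : Prop :=
  IsBottomCorner H Fm ∧ IsTopCorner H Fp ∧ H0 ⊆ H ∧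
    IsHammockIn (fun i => proj i H0) H0 ∧
    (∀ i, (∃ m, IsGreatest (proj i H0) m) ∧ ∃ m, IsLeast (proj i H0) m) ∧
    ∀ i, TripleDotSumEq (proj i Fm) (proj i H0) (proj i Fp) (proj i H)

/-- The carrier of the `n`-fold dot sum `L 0 ∔ L 1 ∔ ⋯ ∔ L (n-1)` inside the lexicographic
sigma type: one removes the minimum of `L i` whenever the dot sum of the preceding
components has a maximum (these two points being identified). -/
def dotSumCarrier {n : ℕ} (L : Fin n → Type u) [∀ i, LinearOrder (L i)] :
    Set (Lex (Σ i, L i)) :=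
  {x | ¬ ((∀ b : L (ofLex x).1, (ofLex x).2 ≤ b) ∧
      ∃ j < (ofLex x).1, (∃ m : L j, ∀ b : L j, b ≤ m) ∧
        ∀ k : Fin n, j < k → k < (ofLex x).1 → IsEmpty (L k))}

/-- The carrier of the binary dot sum `α ∔ β` inside `Lex (α ⊕ β)`: the minimum of `β` is
removed (being identified with the maximum of `α`) whenever both exist. -/
def dotCarrier (α β : Type u) [LinearOrder α] [LinearOrder β] : Set (Lex (α ⊕ β)) :=
  {x | ¬ ((∃ m : α, ∀ a : α, a ≤ m) ∧
      ∃ b : β, (∀ b' : β, b ≤ b') ∧ x = toLex (Sum.inr b))}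

/-- The binary dot sum `α ∔ β` of two linear orders. -/
abbrev DotSum (α β : Type u) [LinearOrder α] [LinearOrder β] : Type u := ↥(dotCarrier α β)

/-- The class `LO_fp` of finitely presented linear orders: the smallest class of linear
orders containing the empty and one-element orders, closed under order isomorphism and
under the operations `L ↦ ω·L`, `L ↦ ω*·L` and `(L₁, L₂) ↦ L₁ + L₂`. -/
inductive IsFinPresLO : ∀ (α : Type u), LinearOrder α → Prop
  | subsingleton (α : Type u) [inst : LinearOrder α] (h : Subsingleton α) :
      IsFinPresLO α inst
  | omegaMul (α : Type u) [inst : LinearOrder α] (h : IsFinPresLO α inst) :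
      IsFinPresLO (Lex (α × ℕ)) inferInstance
  | omegaStarMul (α : Type u) [inst : LinearOrder α] (h : IsFinPresLO α inst) :
      IsFinPresLO (Lex (α × ℕᵒᵈ)) inferInstance
  | sum (α β : Type u) [instα : LinearOrder α] [instβ : LinearOrder β]
      (hα : IsFinPresLO α instα) (hβ : IsFinPresLO β instβ) :
      IsFinPresLO (Lex (α ⊕ β)) inferInstance
  | iso (α β : Type u) [instα : LinearOrder α] [instβ : LinearOrder β]
      (hα : IsFinPresLO α instα) (e : α ≃o β) : IsFinPresLO β instβ





/-! ### Auxiliary development -/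

section HRBasic

variable {α : Type u} [LinearOrder α]

theorem hrEquiv_zero (x y : α) : hrEquiv (0 : Ordinal.{v}) x y ↔ x = y := by
  unfold hrEquiv
  rw [Ordinal.limitRecOn_zero]

theorem hrEquiv_succ (o : Ordinal.{v}) (x y : α) :
    hrEquiv (Order.succ o) x y ↔
      {s : Set α | ∃ z ∈ Set.uIcc x y, s = {w ∈ Set.uIcc x y | hrEquiv o z w}}.Finite := by
  unfold hrEquiv
  rw [Ordinal.limitRecOn_succ]

theorem hrEquiv_limit {o : Ordinal.{v}} (ho : Order.IsSuccLimit o) (x y : α) :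
    hrEquiv o x y ↔ ∃ β, ∃ _ : β < o, hrEquiv β x y := by
  unfold hrEquiv
  rw [Ordinal.limitRecOn_limit (h := ho)]

theorem traces_mono {R : α → α → Prop} {I J : Set α} (hIJ : I ⊆ J)
    (h : {s : Set α | ∃ z ∈ J, s = {w ∈ J | R z w}}.Finite) :
    {s : Set α | ∃ z ∈ I, s = {w ∈ I | R z w}}.Finite := by
  refine (h.image (fun S => S ∩ I)).subset ?_
  rintro s ⟨z, hz, rfl⟩
  refine ⟨{w ∈ J | R z w}, ⟨z, hIJ hz, rfl⟩, ?_⟩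
  ext w
  simp only [Set.mem_inter_iff, Set.mem_sep_iff]
  exact ⟨fun h => ⟨h.2, h.1.2⟩, fun h => ⟨⟨hIJ h.1, h.2⟩, h.1⟩⟩

theorem traces_union {R : α → α → Prop} (hsymm : ∀ a b, R a b → R b a)
    (htrans : ∀ a b c, R a b → R b c → R a c) {I J : Set α}
    (hI : {s : Set α | ∃ z ∈ I, s = {w ∈ I | R z w}}.Finite)
    (hJ : {s : Set α | ∃ z ∈ J, s = {w ∈ J | R z w}}.Finite) :
    {s : Set α | ∃ z ∈ I ∪ J, s = {w ∈ I ∪ J | R z w}}.Finite := by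
  refine (((hI.insert ∅).prod (hJ.insert ∅)).image (fun p => p.1 ∪ p.2)).subset ?_
  rintro s ⟨z, hz, rfl⟩
  have hpart : ∀ K : Set α, {w ∈ K | R z w} ∈ insert (∅ : Set α)
      {s : Set α | ∃ z ∈ K, s = {w ∈ K | R z w}} := by
    intro K
    rcases Set.eq_empty_or_nonempty {w ∈ K | R z w} with he | ⟨z', hz'⟩
    · rw [he]; exact Set.mem_insert _ _
    · refine Set.mem_insert_of_mem _ ⟨z', hz'.1, ?_⟩
      ext w
      simp only [Set.mem_sep_iff]
      exact and_congr_right fun _ =>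
        ⟨fun h => htrans _ _ _ (hsymm _ _ hz'.2) h, fun h => htrans _ _ _ hz'.2 h⟩
  refine ⟨({w ∈ I | R z w}, {w ∈ J | R z w}), ⟨hpart I, hpart J⟩, ?_⟩
  ext w
  simp only [Set.mem_union, Set.mem_sep_iff, Set.mem_setOf_eq]
  tauto

theorem hrEquiv_good (o : Ordinal.{v}) :
    Equivalence (hrEquiv (α := α) o) ∧
      (∀ p q r : α, hrEquiv o p q → p ≤ r → r ≤ q → hrEquiv o p r) ∧
      ∀ o' < o, ∀ x y : α, hrEquiv o' x y → hrEquiv o x y := by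
  induction o using Ordinal.induction with
  | _ o IH =>
  rcases Ordinal.zero_or_succ_or_isSuccLimit o with rfl | ⟨a, rfl⟩ | hlim
  · refine ⟨⟨fun x => (hrEquiv_zero x x).mpr rfl, ?_, ?_⟩, ?_, ?_⟩
    · intro x y h
      rw [hrEquiv_zero] at h ⊢
      exact h.symm
    · intro x y z h1 h2
      rw [hrEquiv_zero] at h1 h2 ⊢
      exact h1.trans h2
    · intro p q r h hpr hrq
      rw [hrEquiv_zero] at h ⊢
      exact le_antisymm hpr (h ▸ hrq)
    · intro o' ho'
      exact absurd ho' (not_lt_zero (a := o'))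
  · obtain ⟨EQ, CV, _MO⟩ := IH a (Order.lt_succ a)
    have hall : ∀ x y : α, hrEquiv a x y → ∀ w ∈ Set.uIcc x y, hrEquiv a x w := by
      intro x y h w hw
      rcases le_total x y with hxy | hyx
      · rw [Set.uIcc_of_le hxy] at hw
        exact CV x y w h hw.1 hw.2
      · rw [Set.uIcc_of_ge hyx] at hw
        exact EQ.trans h (CV y x w (EQ.symm h) hw.1 hw.2)
    have key : ∀ x y : α, hrEquiv a x y → hrEquiv (Order.succ a) x y := by
      intro x y h
      rw [hrEquiv_succ]
      refine (Set.finite_singleton (Set.uIcc x y)).subset ?_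
      rintro s ⟨z, hz, rfl⟩
      have : {w ∈ Set.uIcc x y | hrEquiv a z w} = Set.uIcc x y := by
        ext w
        simp only [Set.mem_sep_iff]
        exact ⟨fun h => h.1, fun hw =>
          ⟨hw, EQ.trans (EQ.symm (hall x y h z hz)) (hall x y h w hw)⟩⟩
      rw [this]
      exact Set.mem_singleton _
    refine ⟨⟨?_, ?_, ?_⟩, ?_, ?_⟩
    · intro x
      exact key x x (EQ.refl x)
    · intro x y h
      rw [hrEquiv_succ] at h ⊢
      rwa [Set.uIcc_comm]
    · intro x y z h1 h2
      rw [hrEquiv_succ] at h1 h2 ⊢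
      exact traces_mono (R := hrEquiv a) Set.uIcc_subset_uIcc_union_uIcc
        (traces_union (R := hrEquiv a) (fun _ _ h => EQ.symm h) (fun _ _ _ h h' => EQ.trans h h') h1 h2)
    · intro p q r h hpr hrq
      rw [hrEquiv_succ] at h ⊢
      exact traces_mono
        (Set.uIcc_subset_uIcc Set.left_mem_uIcc (Set.mem_uIcc.mpr (Or.inl ⟨hpr, hrq⟩))) h
    · intro o' ho' x y h
      rcases (Order.lt_succ_iff.mp ho').lt_or_eq with hlt | rfl
      · exact key x y (_MO o' hlt x y h)
      · exact key x y h
  · have lift : ∀ b < o, ∀ b' ≤ b, ∀ x y : α, hrEquiv b' x y → hrEquiv b x y := by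
      intro b hb b' hb' x y h
      rcases hb'.lt_or_eq with hlt | rfl
      · exact (IH b hb).2.2 b' hlt x y h
      · exact h
    refine ⟨⟨?_, ?_, ?_⟩, ?_, ?_⟩
    · intro x
      exact (hrEquiv_limit hlim x x).mpr ⟨0, hlim.pos, (hrEquiv_zero x x).mpr rfl⟩
    · intro x y h
      obtain ⟨b, hb, h⟩ := (hrEquiv_limit hlim x y).mp h
      exact (hrEquiv_limit hlim y x).mpr ⟨b, hb, (IH b hb).1.symm h⟩
    · intro x y z h1 h2
      obtain ⟨b1, hb1, h1⟩ := (hrEquiv_limit hlim x y).mp h1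
      obtain ⟨b2, hb2, h2⟩ := (hrEquiv_limit hlim y z).mp h2
      have hb : max b1 b2 < o := max_lt hb1 hb2
      exact (hrEquiv_limit hlim x z).mpr ⟨max b1 b2, hb,
        (IH _ hb).1.trans (lift _ hb b1 (le_max_left _ _) x y h1)
          (lift _ hb b2 (le_max_right _ _) y z h2)⟩
    · intro p q r h hpr hrq
      obtain ⟨b, hb, h⟩ := (hrEquiv_limit hlim p q).mp h
      exact (hrEquiv_limit hlim p r).mpr ⟨b, hb, (IH b hb).2.1 p q r h hpr hrq⟩
    · intro o' ho' x y h
      exact (hrEquiv_limit hlim x y).mpr ⟨o', ho', h⟩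

theorem hrEquiv_equivalence (o : Ordinal.{v}) : Equivalence (hrEquiv (α := α) o) :=
  (hrEquiv_good o).1

theorem hrEquiv_mono {o o' : Ordinal.{v}} (h : o ≤ o') {x y : α}
    (hxy : hrEquiv o x y) : hrEquiv o' x y := by
  rcases h.lt_or_eq with hlt | rfl
  · exact (hrEquiv_good o').2.2 o hlt x y hxy
  · exact hxy

end HRBasic


section HRMap

variable {α : Type u} [LinearOrder α]

set_option linter.unusedSectionVars false

theorem hrEquiv_map {β : Type w} [LinearOrder β] (f : β → α) (hf : StrictMono f)
    (hc : ∀ w : α, ∀ x y : β, f x ≤ w → w ≤ f y → w ∈ Set.range f) (o : Ordinal.{v}) :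
    ∀ x y : β, hrEquiv o x y ↔ hrEquiv o (f x) (f y) := by
  have himg : ∀ x y : β, f '' Set.uIcc x y = Set.uIcc (f x) (f y) := by
    intro x y
    ext w
    constructor
    · rintro ⟨u, hu, rfl⟩
      rcases Set.mem_uIcc.mp hu with ⟨h1, h2⟩ | ⟨h1, h2⟩
      · exact Set.mem_uIcc.mpr (Or.inl ⟨hf.monotone h1, hf.monotone h2⟩)
      · exact Set.mem_uIcc.mpr (Or.inr ⟨hf.monotone h1, hf.monotone h2⟩)
    · intro hw
      rcases Set.mem_uIcc.mp hw with ⟨h1, h2⟩ | ⟨h1, h2⟩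
      · rcases hc w x y h1 h2 with ⟨u, rfl⟩
        exact ⟨u, Set.mem_uIcc.mpr (Or.inl ⟨hf.le_iff_le.mp h1, hf.le_iff_le.mp h2⟩), rfl⟩
      · rcases hc w y x h1 h2 with ⟨u, rfl⟩
        exact ⟨u, Set.mem_uIcc.mpr (Or.inr ⟨hf.le_iff_le.mp h1, hf.le_iff_le.mp h2⟩), rfl⟩
  induction o using Ordinal.induction with
  | _ o IH =>
  rcases Ordinal.zero_or_succ_or_isSuccLimit o with rfl | ⟨a, rfl⟩ | hlim
  · intro x y
    rw [hrEquiv_zero, hrEquiv_zero, hf.injective.eq_iff]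
  · intro x y
    rw [hrEquiv_succ, hrEquiv_succ]
    have hIH := IH a (Order.lt_succ a)
    have trace : ∀ z ∈ Set.uIcc x y,
        f '' {w ∈ Set.uIcc x y | hrEquiv a z w}
          = {w ∈ Set.uIcc (f x) (f y) | hrEquiv a (f z) w} := by
      intro z hz
      ext w
      constructor
      · rintro ⟨u, ⟨hu1, hu2⟩, rfl⟩
        exact ⟨(himg x y) ▸ Set.mem_image_of_mem f hu1, (hIH z u).mp hu2⟩
      · rintro ⟨hw1, hw2⟩
        rw [← himg x y] at hw1
        rcases hw1 with ⟨u, hu, rfl⟩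
        exact ⟨u, ⟨hu, (hIH z u).mpr hw2⟩, rfl⟩
    have hEq : {s : Set α | ∃ z ∈ Set.uIcc (f x) (f y),
          s = {w ∈ Set.uIcc (f x) (f y) | hrEquiv a z w}}
        = (Set.image f) ''
          {s : Set β | ∃ z ∈ Set.uIcc x y, s = {w ∈ Set.uIcc x y | hrEquiv a z w}} := by
      ext s
      constructor
      · rintro ⟨z', hz', rfl⟩
        rw [← himg x y] at hz'
        rcases hz' with ⟨z, hz, rfl⟩
        exact ⟨_, ⟨z, hz, rfl⟩, trace z hz⟩
      · rintro ⟨s₀, ⟨z, hz, rfl⟩, rfl⟩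
        exact ⟨f z, (himg x y) ▸ Set.mem_image_of_mem f hz, (trace z hz)⟩
    rw [hEq]
    constructor
    · exact fun h => h.image _
    · intro h
      exact Set.Finite.of_finite_image h ((Set.image_injective.mpr hf.injective).injOn)
  · intro x y
    rw [hrEquiv_limit hlim, hrEquiv_limit hlim]
    exact exists_congr fun b => exists_congr fun hb => IH b hb x y

theorem hrEquiv_subtype {s : Set α} (hs : s.OrdConnected) (o : Ordinal.{v}) (x y : ↥s) :
    hrEquiv o x y ↔ hrEquiv o (x : α) (y : α) :=
  hrEquiv_map (Subtype.val : ↥s → α) (Subtype.strictMono_coe s)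
    (fun w x y h1 h2 => by
      rw [Subtype.range_coe]
      exact hs.out' x.2 y.2 ⟨h1, h2⟩) o x y

end HRMap

section HRClasses

variable {α : Type u} [LinearOrder α]

set_option linter.unusedSectionVars false

theorem hrClass_eq {o : Ordinal.{v}} {z z' : α} (h : hrEquiv o z z') :
    {w : α | hrEquiv o z w} = {w : α | hrEquiv o z' w} := by
  ext w
  exact ⟨fun hw => (hrEquiv_equivalence o).trans ((hrEquiv_equivalence o).symm h) hw,
    fun hw => (hrEquiv_equivalence o).trans h hw⟩

theorem hrClasses_subset_of_le {o o' : Ordinal.{u}} (h : o ≤ o') :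
    hrClasses α o' ⊆ (fun S => {w | ∃ z ∈ S, hrEquiv o' z w}) '' hrClasses α o := by
  rintro s ⟨z, rfl⟩
  refine ⟨{w | hrEquiv o z w}, ⟨z, rfl⟩, ?_⟩
  ext w
  simp only [Set.mem_setOf_eq]
  constructor
  · rintro ⟨z', hz', h2⟩
    exact (hrEquiv_equivalence o').trans (hrEquiv_mono h hz') h2
  · intro hw
    exact ⟨z, (hrEquiv_equivalence o).refl z, hw⟩

theorem hrClasses_finite_mono {o o' : Ordinal.{u}} (h : o ≤ o')
    (hf : (hrClasses α o).Finite) : (hrClasses α o').Finite :=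
  (hf.image _).subset (hrClasses_subset_of_le h)

theorem hrClasses_ncard_anti {o o' : Ordinal.{u}} (h : o ≤ o')
    (hf : (hrClasses α o).Finite) : (hrClasses α o').ncard ≤ (hrClasses α o).ncard :=
  le_trans (Set.ncard_le_ncard (hrClasses_subset_of_le h) (hf.image _))
    (Set.ncard_image_le hf)

theorem hrEquiv_succ_of_finite {o : Ordinal.{u}} (hf : (hrClasses α o).Finite)
    (x y : α) : hrEquiv (Order.succ o) x y := by
  rw [hrEquiv_succ]
  have huniv : {s : Set α | ∃ z ∈ (Set.univ : Set α),
      s = {w ∈ (Set.univ : Set α) | hrEquiv o z w}} = hrClasses α o := by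
    ext s
    constructor
    · rintro ⟨z, -, rfl⟩
      exact ⟨z, by ext w; simp⟩
    · rintro ⟨z, rfl⟩
      exact ⟨z, trivial, by ext w; simp⟩
  exact traces_mono (R := hrEquiv o) (Set.subset_univ _) (huniv ▸ hf)

theorem hrClasses_nonempty [Nonempty α] (o : Ordinal.{u}) : (hrClasses α o).Nonempty :=
  ⟨_, Classical.arbitrary α, rfl⟩

theorem allEquiv_of_ncard_one {o : Ordinal.{u}} (h1 : (hrClasses α o).ncard = 1)
    (x y : α) : hrEquiv o x y := by
  rcases Set.ncard_eq_one.mp h1 with ⟨s, hs⟩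
  have hx : ({w : α | hrEquiv o x w}) ∈ hrClasses α o := ⟨x, rfl⟩
  have hy : ({w : α | hrEquiv o y w}) ∈ hrClasses α o := ⟨y, rfl⟩
  rw [hs, Set.mem_singleton_iff] at hx hy
  have : y ∈ {w : α | hrEquiv o y w} := (hrEquiv_equivalence o).refl y
  rw [hy, ← hx] at this
  exact this

theorem hrClasses_succ_eq [Nonempty α] {o : Ordinal.{u}} (hf : (hrClasses α o).Finite) :
    hrClasses α (Order.succ o) = {Set.univ} := by
  have hcl : ∀ z : α, {w : α | hrEquiv (Order.succ o) z w} = Set.univ := by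
    intro z
    ext w
    exact iff_of_true (hrEquiv_succ_of_finite hf z w) (Set.mem_univ w)
  ext s
  constructor
  · rintro ⟨z, rfl⟩
    rw [hcl z]
    exact Set.mem_singleton _
  · rintro rfl
    exact ⟨Classical.arbitrary α, (hcl _).symm⟩

theorem hrClasses_one_of_lt [Nonempty α] {o o' : Ordinal.{u}}
    (hf : (hrClasses α o).Finite) (h : o < o') :
    (hrClasses α o').Finite ∧ (hrClasses α o').ncard = 1 := by
  have hle : Order.succ o ≤ o' := Order.succ_le_of_lt h
  have hfs : (hrClasses α (Order.succ o)).Finite := by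
    rw [hrClasses_succ_eq hf]
    exact Set.finite_singleton _
  have hfin : (hrClasses α o').Finite := hrClasses_finite_mono hle hfs
  have hub : (hrClasses α o').ncard ≤ 1 := by
    have := hrClasses_ncard_anti hle hfs
    rwa [hrClasses_succ_eq hf, Set.ncard_singleton] at this
  have hlb : 0 < (hrClasses α o').ncard :=
    (Set.ncard_pos hfin).mpr (hrClasses_nonempty o')
  exact ⟨hfin, le_antisymm hub hlb⟩

theorem hrClasses_one_mono [Nonempty α] {o o' : Ordinal.{u}}
    (hf : (hrClasses α o).Finite) (h1 : (hrClasses α o).ncard = 1) (hle : o ≤ o') :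
    (hrClasses α o').Finite ∧ (hrClasses α o').ncard = 1 := by
  rcases hle.lt_or_eq with hlt | rfl
  · exact hrClasses_one_of_lt hf hlt
  · exact ⟨hf, h1⟩

theorem hrClasses_map_eq {β : Type u} [LinearOrder β] (e : α ≃o β) (o : Ordinal.{u}) :
    hrClasses β o = (Set.image (e : α → β)) '' hrClasses α o := by
  have hiff := hrEquiv_map (e : α → β) e.strictMono
    (fun w _ _ _ _ => ⟨e.symm w, e.apply_symm_apply w⟩) o
  have hcl : ∀ z : α, (e : α → β) '' {w : α | hrEquiv o z w} = {w' : β | hrEquiv o (e z) w'} := by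
    intro z
    ext w'
    constructor
    · rintro ⟨w, hw, rfl⟩
      exact (hiff z w).mp hw
    · intro hw'
      exact ⟨e.symm w', (hiff z (e.symm w')).mpr (by rwa [e.apply_symm_apply]), e.apply_symm_apply w'⟩
  ext s
  constructor
  · rintro ⟨z', rfl⟩
    refine ⟨{w : α | hrEquiv o (e.symm z') w}, ⟨e.symm z', rfl⟩, ?_⟩
    rw [hcl, e.apply_symm_apply]
  · rintro ⟨s₀, ⟨z, rfl⟩, rfl⟩
    exact ⟨e z, hcl z⟩

theorem hrClasses_iso_finite {β : Type u} [LinearOrder β] (e : α ≃o β) (o : Ordinal.{u}) :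
    (hrClasses β o).Finite ↔ (hrClasses α o).Finite := by
  rw [hrClasses_map_eq e o]
  constructor
  · intro h
    exact Set.Finite.of_finite_image h
      ((Set.image_injective.mpr e.injective).injOn)
  · exact fun h => h.image _

theorem hrClasses_iso_ncard {β : Type u} [LinearOrder β] (e : α ≃o β) (o : Ordinal.{u}) :
    (hrClasses β o).ncard = (hrClasses α o).ncard := by
  rw [hrClasses_map_eq e o,
    Set.ncard_image_of_injOn ((Set.image_injective.mpr e.injective).injOn)]

end HRClasses


section Cover

variable {α : Type u} [LinearOrder α]

set_option linter.unusedSectionVars false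

theorem part_classes_finite {A : Set α} (hA : A.OrdConnected) {o : Ordinal.{u}}
    (hf : (hrClasses α o).Finite) : (hrClasses ↥A o).Finite := by
  refine (hf.image (fun S => (Subtype.val ⁻¹' S : Set ↥A))).subset ?_
  rintro s ⟨z, rfl⟩
  refine ⟨{w | hrEquiv o (z : α) w}, ⟨(z : α), rfl⟩, ?_⟩
  ext w
  simp only [Set.mem_preimage, Set.mem_setOf_eq]
  exact (hrEquiv_subtype hA o z w).symm

theorem classes_eq_of_cover {A B C : Set α} (hA : A.OrdConnected) (hB : B.OrdConnected)
    (hC : C.OrdConnected) (hcov : A ∪ B ∪ C = Set.univ)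
    (hAB : (A ∩ B).Nonempty) (hBC : (B ∩ C).Nonempty) {o : Ordinal.{u}}
    (h1A : ∀ x y : ↥A, hrEquiv o x y) (h1C : ∀ x y : ↥C, hrEquiv o x y) :
    hrClasses α o
        = (fun S : Set ↥B => {w : α | ∃ z ∈ S, hrEquiv o (z : α) w}) '' hrClasses ↥B o ∧
      Set.InjOn (fun S : Set ↥B => {w : α | ∃ z ∈ S, hrEquiv o (z : α) w})
        (hrClasses ↥B o) := by
  have hnear : ∀ x : α, ∃ b : ↥B, hrEquiv o (b : α) x := by
    intro x
    have hx : x ∈ A ∪ B ∪ C := hcov ▸ Set.mem_univ x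
    rcases hx with (hx | hx) | hx
    · obtain ⟨p, hpA, hpB⟩ := hAB
      exact ⟨⟨p, hpB⟩, (hrEquiv_subtype hA o ⟨p, hpA⟩ ⟨x, hx⟩).mp (h1A ⟨p, hpA⟩ ⟨x, hx⟩)⟩
    · exact ⟨⟨x, hx⟩, (hrEquiv_equivalence o).refl x⟩
    · obtain ⟨p, hpB, hpC⟩ := hBC
      exact ⟨⟨p, hpB⟩, (hrEquiv_subtype hC o ⟨p, hpC⟩ ⟨x, hx⟩).mp (h1C ⟨p, hpC⟩ ⟨x, hx⟩)⟩
  have hPhi : ∀ b : ↥B,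
      {w : α | ∃ z ∈ {w : ↥B | hrEquiv o b w}, hrEquiv o (z : α) w}
        = {w : α | hrEquiv o (b : α) w} := by
    intro b
    ext w
    simp only [Set.mem_setOf_eq]
    constructor
    · rintro ⟨z, hz, h2⟩
      exact (hrEquiv_equivalence o).trans ((hrEquiv_subtype hB o b z).mp hz) h2
    · intro hw
      exact ⟨b, (hrEquiv_equivalence o).refl b, hw⟩
  constructor
  · ext s
    constructor
    · rintro ⟨x, rfl⟩
      obtain ⟨b, hb⟩ := hnear x
      refine ⟨{w : ↥B | hrEquiv o b w}, ⟨b, rfl⟩, ?_⟩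
      simp only [hPhi b]
      exact hrClass_eq hb
    · rintro ⟨s₀, ⟨b, rfl⟩, rfl⟩
      simp only [hPhi b]
      exact ⟨(b : α), rfl⟩
  · rintro S₁ ⟨b₁, rfl⟩ S₂ ⟨b₂, rfl⟩ h
    simp only [hPhi b₁, hPhi b₂] at h
    have hb12 : hrEquiv o (b₁ : α) (b₂ : α) := by
      have : (b₂ : α) ∈ {w : α | hrEquiv o (b₂ : α) w} := (hrEquiv_equivalence o).refl _
      rw [← h] at this
      exact this
    have : hrEquiv o b₁ b₂ := (hrEquiv_subtype hB o b₁ b₂).mpr hb12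
    exact hrClass_eq this

end Cover

section DotCarrier

variable {σ : Type u} {τ : Type u} [LinearOrder σ] [LinearOrder τ]

theorem mem_dotCarrier_inl (a : σ) : toLex (Sum.inl a) ∈ dotCarrier σ τ := by
  rintro ⟨-, b, -, hEq⟩
  rw [toLex_inj] at hEq
  exact Sum.inl_ne_inr hEq

theorem mem_dotCarrier_inr (b : τ) (h : ¬ ∀ b', b ≤ b') :
    toLex (Sum.inr b) ∈ dotCarrier σ τ := by
  rintro ⟨-, b', hb', hEq⟩
  rw [toLex_inj] at hEq
  rcases hEq with rfl | nonsense
  exact h hb'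
  
theorem not_min_of_mem_dotCarrier (hmax : ∃ m : σ, ∀ a, a ≤ m) {b : τ}
    (h : toLex (Sum.inr b) ∈ dotCarrier σ τ) : ¬ ∀ b', b ≤ b' := by
  intro hb
  exact h ⟨hmax, b, hb, rfl⟩

end DotCarrier


section Construct

variable {σ τ : Type u} [LinearOrder σ] [LinearOrder τ]

/-- The left injection into a dot sum. -/
def dotInl (a : σ) : DotSum σ τ := ⟨toLex (Sum.inl a), mem_dotCarrier_inl a⟩

/-- The right injection into a dot sum. -/
def dotInr (b : τ) (h : ¬ ∀ b', b ≤ b') : DotSum σ τ :=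
  ⟨toLex (Sum.inr b), mem_dotCarrier_inr b h⟩

theorem dotInl_strictMono : StrictMono (dotInl : σ → DotSum σ τ) := by
  intro a a' h
  rw [← Subtype.coe_lt_coe]
  exact Sum.Lex.inl_lt_inl_iff.mpr h

variable {α β γ : Type u} [LinearOrder α] [LinearOrder β] [LinearOrder γ]

/-- The middle injection of `β` into `α ∔ β`. -/
def glueB (mα : α) (b0 : β) (hb0 : ∀ b, b0 ≤ b) (b : β) : DotSum α β :=
  if h : b = b0 then dotInl mα
  else dotInr b (fun hball => h (le_antisymm (hball b0) (hb0 b)))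

theorem glueB_b0 (mα : α) (b0 : β) (hb0 : ∀ b, b0 ≤ b) :
    glueB mα b0 hb0 b0 = dotInl mα := dif_pos rfl

theorem glueB_val_ne (mα : α) (b0 : β) (hb0 : ∀ b, b0 ≤ b) {b : β} (h : b ≠ b0) :
    (glueB mα b0 hb0 b).val = toLex (Sum.inr b) := by
  rw [glueB, dif_neg h]
  rfl

theorem glueB_strictMono (mα : α) (hmα : ∀ a, a ≤ mα) (b0 : β) (hb0 : ∀ b, b0 ≤ b) :
    StrictMono (glueB mα b0 hb0) := by
  intro b b' h
  have hb' : b' ≠ b0 := fun hEq => absurd (hb0 b) (not_le.mpr (hEq ▸ h))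
  rw [← Subtype.coe_lt_coe, glueB_val_ne mα b0 hb0 hb']
  by_cases hb : b = b0
  · rw [hb, glueB_b0]
    exact Sum.Lex.inl_lt_inr _ _
  · rw [glueB_val_ne mα b0 hb0 hb]
    exact Sum.Lex.inr_lt_inr_iff.mpr h

theorem glueB_max (mα : α) (hmα : ∀ a, a ≤ mα) (mβ : β) (hmβ : ∀ b, b ≤ mβ)
    (b0 : β) (hb0 : ∀ b, b0 ≤ b) (p : DotSum α β) : p ≤ glueB mα b0 hb0 mβ := by
  obtain ⟨pv, hp⟩ := p
  rw [← Subtype.coe_le_coe]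
  by_cases hmb : mβ = b0
  · rw [hmb, glueB_b0]
    rcases pv with a | b
    · exact Sum.Lex.inl_le_inl_iff.mpr (hmα a)
    · exact absurd (fun b'' => le_trans (hmβ b) (hmb ▸ hb0 b''))
        (not_min_of_mem_dotCarrier ⟨mα, hmα⟩ hp)
  · rw [glueB_val_ne mα b0 hb0 hmb]
    rcases pv with a | b
    · exact Sum.Lex.inl_le_inr _ _
    · exact Sum.Lex.inr_le_inr_iff.mpr (hmβ b)

/-- The right injection of `γ` into `(α ∔ β) ∔ γ`. -/
def glueC (mα : α) (mβ : β) (b0 : β) (hb0 : ∀ b, b0 ≤ b) (c0 : γ) (hc0 : ∀ c, c0 ≤ c)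
    (c : γ) : DotSum (DotSum α β) γ :=
  if h : c = c0 then dotInl (glueB mα b0 hb0 mβ)
  else dotInr c (fun hcall => h (le_antisymm (hcall c0) (hc0 c)))

theorem glueC_c0 (mα : α) (mβ : β) (b0 : β) (hb0 : ∀ b, b0 ≤ b) (c0 : γ)
    (hc0 : ∀ c, c0 ≤ c) : glueC mα mβ b0 hb0 c0 hc0 c0 = dotInl (glueB mα b0 hb0 mβ) :=
  dif_pos rfl

theorem glueC_val_ne (mα : α) (mβ : β) (b0 : β) (hb0 : ∀ b, b0 ≤ b) (c0 : γ)
    (hc0 : ∀ c, c0 ≤ c) {c : γ} (h : c ≠ c0) :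
    (glueC mα mβ b0 hb0 c0 hc0 c).val = toLex (Sum.inr c) := by
  rw [glueC, dif_neg h]
  rfl

theorem glueC_strictMono (mα : α) (hmα : ∀ a, a ≤ mα) (mβ : β) (hmβ : ∀ b, b ≤ mβ)
    (b0 : β) (hb0 : ∀ b, b0 ≤ b) (c0 : γ) (hc0 : ∀ c, c0 ≤ c) :
    StrictMono (glueC mα mβ b0 hb0 c0 hc0) := by
  intro c c' h
  have hc' : c' ≠ c0 := fun hEq => absurd (hc0 c) (not_le.mpr (hEq ▸ h))
  rw [← Subtype.coe_lt_coe, glueC_val_ne mα mβ b0 hb0 c0 hc0 hc']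
  by_cases hc : c = c0
  · rw [hc, glueC_c0]
    exact Sum.Lex.inl_lt_inr _ _
  · rw [glueC_val_ne mα mβ b0 hb0 c0 hc0 hc]
    exact Sum.Lex.inr_lt_inr_iff.mpr h

section Ranges

variable (mα : α) (hmα : ∀ a, a ≤ mα) (mβ : β) (hmβ : ∀ b, b ≤ mβ)
  (b0 : β) (hb0 : ∀ b, b0 ≤ b) (c0 : γ) (hc0 : ∀ c, c0 ≤ c)

include hmα hmβ hb0 hc0

theorem rangeA_ordConnected :
    (Set.range (fun a : α => dotInl (τ := γ) (dotInl (τ := β) a))).OrdConnected := by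
  constructor
  rintro x ⟨a₁, rfl⟩ y ⟨a₂, rfl⟩ w ⟨h1, h2⟩
  obtain ⟨wv, hw⟩ := w
  have h2v := Subtype.coe_le_coe.mpr h2
  rcases wv with p | c
  · obtain ⟨pv, hp⟩ := p
    rcases pv with a | b
    · exact ⟨a, rfl⟩
    · have := Sum.Lex.inl_le_inl_iff.mp h2v
      have := Subtype.coe_le_coe.mpr this
      exact absurd this Sum.Lex.not_inr_le_inl
  · exact absurd h2v Sum.Lex.not_inr_le_inl

theorem rangeB_ordConnected :
    (Set.range (fun b : β => dotInl (τ := γ) (glueB mα b0 hb0 b))).OrdConnected := by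
  constructor
  rintro x ⟨b₁, rfl⟩ y ⟨b₂, rfl⟩ w ⟨h1, h2⟩
  obtain ⟨wv, hw⟩ := w
  have h1v := Subtype.coe_le_coe.mpr h1
  have h2v := Subtype.coe_le_coe.mpr h2
  rcases wv with p | c
  · obtain ⟨pv, hp⟩ := p
    have h1p : (glueB mα b0 hb0 b₁).val ≤ pv :=
      Subtype.coe_le_coe.mpr (Sum.Lex.inl_le_inl_iff.mp h1v)
    rcases pv with a | b
    · by_cases hb₁ : b₁ = b0
      · rw [hb₁, glueB_b0] at h1p
        have hma : mα ≤ a := Sum.Lex.inl_le_inl_iff.mp h1p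
        have ha : a = mα := le_antisymm (hmα a) hma
        refine ⟨b0, ?_⟩
        apply Subtype.ext
        show (dotInl (glueB mα b0 hb0 b0)).val
          = toLex (Sum.inl (⟨toLex (Sum.inl a), hp⟩ : DotSum α β))
        rw [glueB_b0]
        subst ha
        rfl
      · rw [glueB_val_ne mα b0 hb0 hb₁] at h1p
        exact absurd h1p Sum.Lex.not_inr_le_inl
    · have hbmin := not_min_of_mem_dotCarrier ⟨mα, hmα⟩ hp
      have hbne : b ≠ b0 := fun hEq => hbmin (hEq ▸ hb0)
      refine ⟨b, ?_⟩
      apply Subtype.ext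
      exact congrArg (fun q : DotSum α β => toLex (Sum.inl q))
        (Subtype.ext (glueB_val_ne mα b0 hb0 hbne))
  · exact absurd h2v Sum.Lex.not_inr_le_inl

theorem rangeC_ordConnected :
    (Set.range (glueC mα mβ b0 hb0 c0 hc0)).OrdConnected := by
  constructor
  rintro x ⟨c₁, rfl⟩ y ⟨c₂, rfl⟩ w ⟨h1, h2⟩
  obtain ⟨wv, hw⟩ := w
  have h1v := Subtype.coe_le_coe.mpr h1
  rcases wv with p | c
  · by_cases hc₁ : c₁ = c0
    · rw [hc₁, glueC_c0] at h1v
      have h1p : glueB mα b0 hb0 mβ ≤ p := Sum.Lex.inl_le_inl_iff.mp h1v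
      have hp : p = glueB mα b0 hb0 mβ :=
        le_antisymm (glueB_max mα hmα mβ hmβ b0 hb0 p) h1p
      refine ⟨c0, ?_⟩
      apply Subtype.ext
      show (glueC mα mβ b0 hb0 c0 hc0 c0).val = toLex (Sum.inl p)
      rw [glueC_c0, hp]
      rfl
    · rw [← Subtype.coe_le_coe] at h1
      rw [glueC_val_ne mα mβ b0 hb0 c0 hc0 hc₁] at h1
      exact absurd h1 Sum.Lex.not_inr_le_inl
  · have hcmin := not_min_of_mem_dotCarrier
      ⟨glueB mα b0 hb0 mβ, glueB_max mα hmα mβ hmβ b0 hb0⟩ hw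
    have hcne : c ≠ c0 := fun hEq => hcmin (hEq ▸ hc0)
    refine ⟨c, ?_⟩
    apply Subtype.ext
    exact glueC_val_ne mα mβ b0 hb0 c0 hc0 hcne

theorem ranges_cover :
    Set.range (fun a : α => dotInl (τ := γ) (dotInl (τ := β) a))
        ∪ Set.range (fun b : β => dotInl (τ := γ) (glueB mα b0 hb0 b))
        ∪ Set.range (glueC mα mβ b0 hb0 c0 hc0) = Set.univ := by
  ext w
  simp only [Set.mem_univ, iff_true, Set.mem_union, Set.mem_range]
  obtain ⟨wv, hw⟩ := w
  rcases wv with p | c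
  · obtain ⟨pv, hp⟩ := p
    rcases pv with a | b
    · exact Or.inl (Or.inl ⟨a, rfl⟩)
    · have hbmin := not_min_of_mem_dotCarrier ⟨mα, hmα⟩ hp
      have hbne : b ≠ b0 := fun hEq => hbmin (hEq ▸ hb0)
      refine Or.inl (Or.inr ⟨b, ?_⟩)
      apply Subtype.ext
      exact congrArg (fun q : DotSum α β => toLex (Sum.inl q))
        (Subtype.ext (glueB_val_ne mα b0 hb0 hbne))
  · have hcmin := not_min_of_mem_dotCarrier
      ⟨glueB mα b0 hb0 mβ, glueB_max mα hmα mβ hmβ b0 hb0⟩ hw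
    have hcne : c ≠ c0 := fun hEq => hcmin (hEq ▸ hc0)
    refine Or.inr ⟨c, ?_⟩
    apply Subtype.ext
    exact glueC_val_ne mα mβ b0 hb0 c0 hc0 hcne

theorem rangeAB_nonempty :
    (Set.range (fun a : α => dotInl (τ := γ) (dotInl (τ := β) a))
      ∩ Set.range (fun b : β => dotInl (τ := γ) (glueB mα b0 hb0 b))).Nonempty := by
  refine ⟨dotInl (dotInl mα), ⟨mα, rfl⟩, ⟨b0, ?_⟩⟩
  simp only [glueB_b0]

theorem rangeBC_nonempty :
    (Set.range (fun b : β => dotInl (τ := γ) (glueB mα b0 hb0 b))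
      ∩ Set.range (glueC mα mβ b0 hb0 c0 hc0)).Nonempty := by
  refine ⟨dotInl (glueB mα b0 hb0 mβ), ⟨mβ, rfl⟩, ⟨c0, ?_⟩⟩
  simp only [glueC_c0]

end Ranges

end Construct


section Density

theorem density_eq_top {α : Type u} [LinearOrder α]
    (hex : ¬ ∃ o : Ordinal.{u}, (hrClasses α o).Finite) :
    density α = ((⊤ : WithTop Ordinal.{u}) : WithBot (WithTop Ordinal.{u})) := by
  unfold density
  rw [dif_neg hex]

theorem density_eq_of_nonempty {α : Type u} [LinearOrder α] (hne : Nonempty α)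
    (hex : ∃ o : Ordinal.{u}, (hrClasses α o).Finite) :
    density α = ((((Ordinal.omega0.{u} * sInf {o' : Ordinal.{u} | (hrClasses α o').Finite} +
        (((hrClasses α (sInf {o' : Ordinal.{u} | (hrClasses α o').Finite})).ncard - 1 : ℕ) :
          Ordinal.{u})) : Ordinal.{u}) : WithTop Ordinal.{u}) : WithBot (WithTop Ordinal.{u})) := by
  unfold density
  rw [dif_pos hex, if_pos hne]

theorem density_limit_spec {α : Type u} [LinearOrder α] (hne : Nonempty α)
    {o : Ordinal.{u}} (hlim : Order.IsSuccLimit o)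
    (h : density α = ((o : WithTop Ordinal.{u}) : WithBot (WithTop Ordinal.{u}))) :
    (∃ o' : Ordinal.{u}, (hrClasses α o').Finite) ∧
      (hrClasses α (sInf {o' : Ordinal.{u} | (hrClasses α o').Finite})).ncard = 1 ∧
      o = Ordinal.omega0.{u} * sInf {o' : Ordinal.{u} | (hrClasses α o').Finite} := by
  haveI := hne
  have hex : ∃ o' : Ordinal.{u}, (hrClasses α o').Finite := by
    by_contra hex
    rw [density_eq_top hex] at h
    have h2 := WithBot.coe_inj.mp h
    exact WithTop.coe_ne_top h2.symm
  rw [density_eq_of_nonempty hne hex] at h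
  have heq : Ordinal.omega0.{u} * sInf {o' : Ordinal.{u} | (hrClasses α o').Finite} +
      (((hrClasses α (sInf {o' : Ordinal.{u} | (hrClasses α o').Finite})).ncard - 1 : ℕ) :
        Ordinal.{u}) = o :=
    WithTop.coe_inj.mp (WithBot.coe_inj.mp h)
  have hk0 : ((hrClasses α (sInf {o' : Ordinal.{u} | (hrClasses α o').Finite})).ncard - 1 : ℕ)
      = 0 := by
    by_contra hk
    obtain ⟨k', hk'⟩ := Nat.exists_eq_succ_of_ne_zero hk
    rw [hk'] at heq
    have hsucc : o = Order.succ (Ordinal.omega0.{u} *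
        sInf {o' : Ordinal.{u} | (hrClasses α o').Finite} + (k' : Ordinal.{u})) := by
      rw [← heq, Nat.cast_succ, ← add_assoc, Ordinal.add_one_eq_succ]
    exact Order.not_isSuccLimit_succ _ (hsucc ▸ hlim)
  have hfin : (hrClasses α (sInf {o' : Ordinal.{u} | (hrClasses α o').Finite})).Finite :=
    csInf_mem hex
  have hpos : 0 < (hrClasses α (sInf {o' : Ordinal.{u} | (hrClasses α o').Finite})).ncard :=
    (Set.ncard_pos hfin).mpr (hrClasses_nonempty _)
  refine ⟨hex, by omega, ?_⟩
  rw [← heq, hk0, Nat.cast_zero, add_zero]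

end Density

/-- if `L₋, L₀` have maxima, `L₀, L₊` have minima, and `d(L₋)`, `d(L₊)`
are limit ordinals, then `d(L₋ ∔ L₀ ∔ L₊) = max {d(L₋), d(L₀), d(L₊)}`. -/
theorem statement16 {α β γ : Type u} [LinearOrder α] [LinearOrder β] [LinearOrder γ]
    (hmaxα : ∃ m : α, ∀ a, a ≤ m) (hmaxβ : ∃ m : β, ∀ a, a ≤ m)
    (hminβ : ∃ m : β, ∀ a, m ≤ a) (hminγ : ∃ m : γ, ∀ a, m ≤ a)
    (hlimα : ∃ o : Ordinal.{u}, Order.IsSuccLimit o ∧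
      density α = ((o : WithTop Ordinal.{u}) : WithBot (WithTop Ordinal.{u})))
    (hlimγ : ∃ o : Ordinal.{u}, Order.IsSuccLimit o ∧
      density γ = ((o : WithTop Ordinal.{u}) : WithBot (WithTop Ordinal.{u}))) :
    density (DotSum (DotSum α β) γ) = max (max (density α) (density β)) (density γ) := by
  obtain ⟨mα, hmα⟩ := hmaxα
  obtain ⟨mβ, hmβ⟩ := hmaxβ
  obtain ⟨b0, hb0⟩ := hminβ
  obtain ⟨c0, hc0⟩ := hminγ
  haveI hneα : Nonempty α := ⟨mα⟩
  haveI hneβ : Nonempty β := ⟨b0⟩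
  haveI hneγ : Nonempty γ := ⟨c0⟩
  haveI hneL : Nonempty (DotSum (DotSum α β) γ) := ⟨dotInl (dotInl mα)⟩
  have hAconv := rangeA_ordConnected mα hmα mβ hmβ b0 hb0 c0 hc0
  have hBconv := rangeB_ordConnected mα hmα mβ hmβ b0 hb0 c0 hc0
  have hCconv := rangeC_ordConnected mα hmα mβ hmβ b0 hb0 c0 hc0
  have hcover := ranges_cover mα hmα mβ hmβ b0 hb0 c0 hc0
  have hABne := rangeAB_nonempty mα hmα mβ hmβ b0 hb0 c0 hc0
  have hBCne := rangeBC_nonempty mα hmα mβ hmβ b0 hb0 c0 hc0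
  have eAiso : α ≃o ↥(Set.range (fun a : α => dotInl (τ := γ) (dotInl (τ := β) a))) :=
    StrictMono.orderIso _ (fun x y h => dotInl_strictMono (dotInl_strictMono h))
  have eBiso : β ≃o ↥(Set.range (fun b : β => dotInl (τ := γ) (glueB mα b0 hb0 b))) :=
    StrictMono.orderIso _ (fun x y h => dotInl_strictMono (glueB_strictMono mα hmα b0 hb0 h))
  have eCiso : γ ≃o ↥(Set.range (glueC mα mβ b0 hb0 c0 hc0)) :=
    StrictMono.orderIso _ (glueC_strictMono mα hmα mβ hmβ b0 hb0 c0 hc0)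
  obtain ⟨oα, hoαlim, hdα⟩ := hlimα
  obtain ⟨oγ, hoγlim, hdγ⟩ := hlimγ
  obtain ⟨hexα, hnα1, hoαeq⟩ := density_limit_spec hneα hoαlim hdα
  obtain ⟨hexγ, hnγ1, hoγeq⟩ := density_limit_spec hneγ hoγlim hdγ
  by_cases hSβ : ∃ o : Ordinal.{u}, (hrClasses β o).Finite
  case neg =>
    have htop : ∀ x : WithBot (WithTop Ordinal.{u}),
        x ≤ ((⊤ : WithTop Ordinal.{u}) : WithBot (WithTop Ordinal.{u})) := by
      intro x
      induction x using WithBot.recBotCoe with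
      | bot => exact bot_le
      | coe a => exact WithBot.coe_le_coe.mpr le_top
    have hLnot : ¬ ∃ o : Ordinal.{u}, (hrClasses (DotSum (DotSum α β) γ) o).Finite := by
      rintro ⟨o, ho⟩
      exact hSβ ⟨o, (hrClasses_iso_finite eBiso o).mp (part_classes_finite hBconv ho)⟩
    rw [density_eq_top hLnot, density_eq_top hSβ,
      max_eq_right (htop (density α)), max_eq_left (htop (density γ))]
  case pos =>
    have hrαmem : (hrClasses α (sInf {o' : Ordinal.{u} | (hrClasses α o').Finite})).Finite := csInf_mem hexα
    have hrβmem : (hrClasses β (sInf {o' : Ordinal.{u} | (hrClasses β o').Finite})).Finite := csInf_mem hSβ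
    have hrγmem : (hrClasses γ (sInf {o' : Ordinal.{u} | (hrClasses γ o').Finite})).Finite := csInf_mem hexγ
    have hrαler : (sInf {o' : Ordinal.{u} | (hrClasses α o').Finite}) ≤ (max (max (sInf {o' : Ordinal.{u} | (hrClasses α o').Finite}) (sInf {o' : Ordinal.{u} | (hrClasses β o').Finite})) (sInf {o' : Ordinal.{u} | (hrClasses γ o').Finite})) := le_trans (le_max_left _ _) (le_max_left _ _)
    have hrβler : (sInf {o' : Ordinal.{u} | (hrClasses β o').Finite}) ≤ (max (max (sInf {o' : Ordinal.{u} | (hrClasses α o').Finite}) (sInf {o' : Ordinal.{u} | (hrClasses β o').Finite})) (sInf {o' : Ordinal.{u} | (hrClasses γ o').Finite})) := le_trans (le_max_right _ _) (le_max_left _ _)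
    have hrγler : (sInf {o' : Ordinal.{u} | (hrClasses γ o').Finite}) ≤ (max (max (sInf {o' : Ordinal.{u} | (hrClasses α o').Finite}) (sInf {o' : Ordinal.{u} | (hrClasses β o').Finite})) (sInf {o' : Ordinal.{u} | (hrClasses γ o').Finite})) := le_max_right _ _
    have hfαr : (hrClasses α (max (max (sInf {o' : Ordinal.{u} | (hrClasses α o').Finite}) (sInf {o' : Ordinal.{u} | (hrClasses β o').Finite})) (sInf {o' : Ordinal.{u} | (hrClasses γ o').Finite}))).Finite := hrClasses_finite_mono hrαler hrαmem
    have hfβr : (hrClasses β (max (max (sInf {o' : Ordinal.{u} | (hrClasses α o').Finite}) (sInf {o' : Ordinal.{u} | (hrClasses β o').Finite})) (sInf {o' : Ordinal.{u} | (hrClasses γ o').Finite}))).Finite := hrClasses_finite_mono hrβler hrβmem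
    have hfγr : (hrClasses γ (max (max (sInf {o' : Ordinal.{u} | (hrClasses α o').Finite}) (sInf {o' : Ordinal.{u} | (hrClasses β o').Finite})) (sInf {o' : Ordinal.{u} | (hrClasses γ o').Finite}))).Finite := hrClasses_finite_mono hrγler hrγmem
    have hnαr : (hrClasses α (max (max (sInf {o' : Ordinal.{u} | (hrClasses α o').Finite}) (sInf {o' : Ordinal.{u} | (hrClasses β o').Finite})) (sInf {o' : Ordinal.{u} | (hrClasses γ o').Finite}))).ncard = 1 := (hrClasses_one_mono hrαmem hnα1 hrαler).2
    have hnγr : (hrClasses γ (max (max (sInf {o' : Ordinal.{u} | (hrClasses α o').Finite}) (sInf {o' : Ordinal.{u} | (hrClasses β o').Finite})) (sInf {o' : Ordinal.{u} | (hrClasses γ o').Finite}))).ncard = 1 := (hrClasses_one_mono hrγmem hnγ1 hrγler).2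
    have h1A : ∀ x y : ↥(Set.range (fun a : α => dotInl (τ := γ) (dotInl (τ := β) a))), hrEquiv (max (max (sInf {o' : Ordinal.{u} | (hrClasses α o').Finite}) (sInf {o' : Ordinal.{u} | (hrClasses β o').Finite})) (sInf {o' : Ordinal.{u} | (hrClasses γ o').Finite})) x y :=
      allEquiv_of_ncard_one (by rw [hrClasses_iso_ncard eAiso (max (max (sInf {o' : Ordinal.{u} | (hrClasses α o').Finite}) (sInf {o' : Ordinal.{u} | (hrClasses β o').Finite})) (sInf {o' : Ordinal.{u} | (hrClasses γ o').Finite}))]; exact hnαr)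
    have h1C : ∀ x y : ↥(Set.range (glueC mα mβ b0 hb0 c0 hc0)), hrEquiv (max (max (sInf {o' : Ordinal.{u} | (hrClasses α o').Finite}) (sInf {o' : Ordinal.{u} | (hrClasses β o').Finite})) (sInf {o' : Ordinal.{u} | (hrClasses γ o').Finite})) x y :=
      allEquiv_of_ncard_one (by rw [hrClasses_iso_ncard eCiso (max (max (sInf {o' : Ordinal.{u} | (hrClasses α o').Finite}) (sInf {o' : Ordinal.{u} | (hrClasses β o').Finite})) (sInf {o' : Ordinal.{u} | (hrClasses γ o').Finite}))]; exact hnγr)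
    obtain ⟨hLeq, hLinj⟩ :=
      classes_eq_of_cover hAconv hBconv hCconv hcover hABne hBCne h1A h1C
    have hfBr' : (hrClasses ↥(Set.range (fun b : β => dotInl (τ := γ) (glueB mα b0 hb0 b))) (max (max (sInf {o' : Ordinal.{u} | (hrClasses α o').Finite}) (sInf {o' : Ordinal.{u} | (hrClasses β o').Finite})) (sInf {o' : Ordinal.{u} | (hrClasses γ o').Finite}))).Finite := (hrClasses_iso_finite eBiso (max (max (sInf {o' : Ordinal.{u} | (hrClasses α o').Finite}) (sInf {o' : Ordinal.{u} | (hrClasses β o').Finite})) (sInf {o' : Ordinal.{u} | (hrClasses γ o').Finite}))).mpr hfβr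
    have hLfinr : (hrClasses (DotSum (DotSum α β) γ) (max (max (sInf {o' : Ordinal.{u} | (hrClasses α o').Finite}) (sInf {o' : Ordinal.{u} | (hrClasses β o').Finite})) (sInf {o' : Ordinal.{u} | (hrClasses γ o').Finite}))).Finite := by
      rw [hLeq]
      exact hfBr'.image _
    have hLncardr : (hrClasses (DotSum (DotSum α β) γ) (max (max (sInf {o' : Ordinal.{u} | (hrClasses α o').Finite}) (sInf {o' : Ordinal.{u} | (hrClasses β o').Finite})) (sInf {o' : Ordinal.{u} | (hrClasses γ o').Finite}))).ncard = (hrClasses β (max (max (sInf {o' : Ordinal.{u} | (hrClasses α o').Finite}) (sInf {o' : Ordinal.{u} | (hrClasses β o').Finite})) (sInf {o' : Ordinal.{u} | (hrClasses γ o').Finite}))).ncard := by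
      rw [hLeq, Set.ncard_image_of_injOn hLinj, hrClasses_iso_ncard eBiso (max (max (sInf {o' : Ordinal.{u} | (hrClasses α o').Finite}) (sInf {o' : Ordinal.{u} | (hrClasses β o').Finite})) (sInf {o' : Ordinal.{u} | (hrClasses γ o').Finite}))]
    have hsInfL : sInf {o' : Ordinal.{u} | (hrClasses (DotSum (DotSum α β) γ) o').Finite} = (max (max (sInf {o' : Ordinal.{u} | (hrClasses α o').Finite}) (sInf {o' : Ordinal.{u} | (hrClasses β o').Finite})) (sInf {o' : Ordinal.{u} | (hrClasses γ o').Finite})) := by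
      apply le_antisymm
      · exact csInf_le' hLfinr
      · refine le_csInf ⟨(max (max (sInf {o' : Ordinal.{u} | (hrClasses α o').Finite}) (sInf {o' : Ordinal.{u} | (hrClasses β o').Finite})) (sInf {o' : Ordinal.{u} | (hrClasses γ o').Finite})), hLfinr⟩ ?_
        intro o ho
        refine max_le (max_le ?_ ?_) ?_
        · exact csInf_le' ((hrClasses_iso_finite eAiso o).mp (part_classes_finite hAconv ho))
        · exact csInf_le' ((hrClasses_iso_finite eBiso o).mp (part_classes_finite hBconv ho))
        · exact csInf_le' ((hrClasses_iso_finite eCiso o).mp (part_classes_finite hCconv ho))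
    have hdL : density (DotSum (DotSum α β) γ)
        = ((((Ordinal.omega0.{u} * (max (max (sInf {o' : Ordinal.{u} | (hrClasses α o').Finite}) (sInf {o' : Ordinal.{u} | (hrClasses β o').Finite})) (sInf {o' : Ordinal.{u} | (hrClasses γ o').Finite})) + (((hrClasses β (max (max (sInf {o' : Ordinal.{u} | (hrClasses α o').Finite}) (sInf {o' : Ordinal.{u} | (hrClasses β o').Finite})) (sInf {o' : Ordinal.{u} | (hrClasses γ o').Finite}))).ncard - 1 : ℕ) : Ordinal.{u})) :
          Ordinal.{u}) : WithTop Ordinal.{u}) : WithBot (WithTop Ordinal.{u})) := by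
      rw [density_eq_of_nonempty hneL ⟨(max (max (sInf {o' : Ordinal.{u} | (hrClasses α o').Finite}) (sInf {o' : Ordinal.{u} | (hrClasses β o').Finite})) (sInf {o' : Ordinal.{u} | (hrClasses γ o').Finite})), hLfinr⟩, hsInfL, hLncardr]
    have hdβv : density β
        = ((((Ordinal.omega0.{u} * (sInf {o' : Ordinal.{u} | (hrClasses β o').Finite}) + (((hrClasses β (sInf {o' : Ordinal.{u} | (hrClasses β o').Finite})).ncard - 1 : ℕ) : Ordinal.{u})) :
          Ordinal.{u}) : WithTop Ordinal.{u}) : WithBot (WithTop Ordinal.{u})) :=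
      density_eq_of_nonempty hneβ hSβ
    rw [hoαeq] at hdα
    rw [hoγeq] at hdγ
    have hcoemono : Monotone (fun o : Ordinal.{u} =>
        ((o : WithTop Ordinal.{u}) : WithBot (WithTop Ordinal.{u}))) :=
      fun x y h => WithBot.coe_le_coe.mpr (WithTop.coe_le_coe.mpr h)
    have cmax : ∀ a b : Ordinal.{u},
        (max ((a : WithTop Ordinal.{u}) : WithBot (WithTop Ordinal.{u}))
            ((b : WithTop Ordinal.{u}) : WithBot (WithTop Ordinal.{u})))
          = (((max a b : Ordinal.{u}) : WithTop Ordinal.{u}) : WithBot (WithTop Ordinal.{u})) := by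
      intro a b
      rcases le_total a b with h | h
      · rw [max_eq_right h, max_eq_right (hcoemono h)]
      · rw [max_eq_left h, max_eq_left (hcoemono h)]
    rw [hdL, hdα, hdβv, hdγ, cmax, cmax]
    have hord : Ordinal.omega0.{u} * (max (max (sInf {o' : Ordinal.{u} | (hrClasses α o').Finite}) (sInf {o' : Ordinal.{u} | (hrClasses β o').Finite})) (sInf {o' : Ordinal.{u} | (hrClasses γ o').Finite})) + (((hrClasses β (max (max (sInf {o' : Ordinal.{u} | (hrClasses α o').Finite}) (sInf {o' : Ordinal.{u} | (hrClasses β o').Finite})) (sInf {o' : Ordinal.{u} | (hrClasses γ o').Finite}))).ncard - 1 : ℕ) : Ordinal.{u})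
        = max (max (Ordinal.omega0.{u} * (sInf {o' : Ordinal.{u} | (hrClasses α o').Finite}))
            (Ordinal.omega0.{u} * (sInf {o' : Ordinal.{u} | (hrClasses β o').Finite}) + (((hrClasses β (sInf {o' : Ordinal.{u} | (hrClasses β o').Finite})).ncard - 1 : ℕ) : Ordinal.{u})))
          (Ordinal.omega0.{u} * (sInf {o' : Ordinal.{u} | (hrClasses γ o').Finite})) := by
      rcases hrβler.lt_or_eq with hlt | heqr
      · have h1 : (hrClasses β (max (max (sInf {o' : Ordinal.{u} | (hrClasses α o').Finite}) (sInf {o' : Ordinal.{u} | (hrClasses β o').Finite})) (sInf {o' : Ordinal.{u} | (hrClasses γ o').Finite}))).ncard = 1 := (hrClasses_one_of_lt hrβmem hlt).2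
        rw [h1, Nat.sub_self, Nat.cast_zero, add_zero]
        have hβb : Ordinal.omega0.{u} * (sInf {o' : Ordinal.{u} | (hrClasses β o').Finite}) + (((hrClasses β (sInf {o' : Ordinal.{u} | (hrClasses β o').Finite})).ncard - 1 : ℕ) : Ordinal.{u})
            ≤ Ordinal.omega0.{u} * (max (max (sInf {o' : Ordinal.{u} | (hrClasses α o').Finite}) (sInf {o' : Ordinal.{u} | (hrClasses β o').Finite})) (sInf {o' : Ordinal.{u} | (hrClasses γ o').Finite})) := by
          have h2 : Ordinal.omega0.{u} * (sInf {o' : Ordinal.{u} | (hrClasses β o').Finite})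
                + (((hrClasses β (sInf {o' : Ordinal.{u} | (hrClasses β o').Finite})).ncard - 1 : ℕ) : Ordinal.{u})
              < Ordinal.omega0.{u} * (sInf {o' : Ordinal.{u} | (hrClasses β o').Finite}) + Ordinal.omega0.{u} :=
            (add_lt_add_iff_left _).mpr (Ordinal.nat_lt_omega0 _)
          rw [← Ordinal.mul_succ] at h2
          exact h2.le.trans (mul_le_mul_right (Order.succ_le_of_lt hlt) _)
        have hαb : Ordinal.omega0.{u} * (sInf {o' : Ordinal.{u} | (hrClasses α o').Finite}) ≤ Ordinal.omega0.{u} * (max (max (sInf {o' : Ordinal.{u} | (hrClasses α o').Finite}) (sInf {o' : Ordinal.{u} | (hrClasses β o').Finite})) (sInf {o' : Ordinal.{u} | (hrClasses γ o').Finite})) :=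
          mul_le_mul_right hrαler _
        have hγb : Ordinal.omega0.{u} * (sInf {o' : Ordinal.{u} | (hrClasses γ o').Finite}) ≤ Ordinal.omega0.{u} * (max (max (sInf {o' : Ordinal.{u} | (hrClasses α o').Finite}) (sInf {o' : Ordinal.{u} | (hrClasses β o').Finite})) (sInf {o' : Ordinal.{u} | (hrClasses γ o').Finite})) :=
          mul_le_mul_right hrγler _
        apply le_antisymm
        · rcases max_cases (max (sInf {o' : Ordinal.{u} | (hrClasses α o').Finite}) (sInf {o' : Ordinal.{u} | (hrClasses β o').Finite})) (sInf {o' : Ordinal.{u} | (hrClasses γ o').Finite}) with ⟨h', -⟩ | ⟨h', -⟩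
          · rcases max_cases (sInf {o' : Ordinal.{u} | (hrClasses α o').Finite}) (sInf {o' : Ordinal.{u} | (hrClasses β o').Finite}) with ⟨h'', -⟩ | ⟨h'', -⟩
            · have hR : (max (max (sInf {o' : Ordinal.{u} | (hrClasses α o').Finite}) (sInf {o' : Ordinal.{u} | (hrClasses β o').Finite})) (sInf {o' : Ordinal.{u} | (hrClasses γ o').Finite})) = (sInf {o' : Ordinal.{u} | (hrClasses α o').Finite}) := by rw [h', h'']
              rw [hR]
              exact le_trans (le_max_left _ _) (le_max_left _ _)
            · exfalso
              have hR : (max (max (sInf {o' : Ordinal.{u} | (hrClasses α o').Finite}) (sInf {o' : Ordinal.{u} | (hrClasses β o').Finite})) (sInf {o' : Ordinal.{u} | (hrClasses γ o').Finite})) = (sInf {o' : Ordinal.{u} | (hrClasses β o').Finite}) := by rw [h', h'']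
              rw [hR] at hlt
              exact lt_irrefl _ hlt
          · have hR : (max (max (sInf {o' : Ordinal.{u} | (hrClasses α o').Finite}) (sInf {o' : Ordinal.{u} | (hrClasses β o').Finite})) (sInf {o' : Ordinal.{u} | (hrClasses γ o').Finite})) = (sInf {o' : Ordinal.{u} | (hrClasses γ o').Finite}) := h'
            rw [hR]
            exact le_max_right _ _
        · exact max_le (max_le hαb hβb) hγb
      · rw [← heqr]
        have h1 : Ordinal.omega0.{u} * (sInf {o' : Ordinal.{u} | (hrClasses α o').Finite})
            ≤ Ordinal.omega0.{u} * (sInf {o' : Ordinal.{u} | (hrClasses β o').Finite}) + (((hrClasses β (sInf {o' : Ordinal.{u} | (hrClasses β o').Finite})).ncard - 1 : ℕ) : Ordinal.{u}) :=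
          le_trans (mul_le_mul_right (by rw [heqr]; exact hrαler) _) le_self_add
        have h2 : Ordinal.omega0.{u} * (sInf {o' : Ordinal.{u} | (hrClasses γ o').Finite})
            ≤ Ordinal.omega0.{u} * (sInf {o' : Ordinal.{u} | (hrClasses β o').Finite}) + (((hrClasses β (sInf {o' : Ordinal.{u} | (hrClasses β o').Finite})).ncard - 1 : ℕ) : Ordinal.{u}) :=
          le_trans (mul_le_mul_right (by rw [heqr]; exact hrγler) _) le_self_add
        rw [max_eq_right h1, max_eq_left h2]
    exact congrArg _ (congrArg _ hord)


end PaperHam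

end
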